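/- arXiv:math/0509318 — 2 statements merged into one kernel-verified Lean document; each statement's English description precedes it below -/
import Mathlib

section
/- Let C be a locally λ-presentable category in which the class of monomorphisms is stable under pushouts (transferability property). If an object M of C is both λ-injective (injective with respect to all λ-presentable monomorphisms) and λ-pure-injective (injective with respect to all λ-pure monomorphisms), then M is injective with respect to all monomorphisms. -/
universe v u

open CategoryTheory Limits Opposite

/-- A small category `J` is `κ`-filtered if every diagram in `J` of size `< κ`
admits a cocone. -/
def IsKappaFiltered (J : Type v) [SmallCategory J] (κ : Cardinal.{v}) : Prop :=
  ∀ (K : Type v) (_ : SmallCategory K), Cardinal.mk (Σ (a : K) (b : K), a ⟶ b) < κ →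
    ∀ F : K ⥤ J, Nonempty (Cocone F)

/-- An object `X` is `κ`-presentable if its hom-functor preserves `κ`-filtered colimits. -/
def KPresentable {C : Type u} [Category.{v} C] (κ : Cardinal.{v}) (X : C) : Prop :=
  ∀ (J : Type v) (_ : SmallCategory J), IsKappaFiltered J κ →
    Nonempty (PreservesColimitsOfShape J (coyoneda.obj (op X)))

/-- An object `X` is `κ`-generated if its hom-functor preserves `κ`-filtered colimits
of diagrams of monomorphisms. -/
def KGenerated {C : Type u} [Category.{v} C] (κ : Cardinal.{v}) (X : C) : Prop :=
  ∀ (J : Type v) (_ : SmallCategory J), IsKappaFiltered J κ →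
    ∀ F : J ⥤ C, (∀ {i j : J} (f : i ⟶ j), Mono (F.map f)) →
      Nonempty (PreservesColimit F (coyoneda.obj (op X)))

/-- `C` is locally `κ`-presentable. -/
def LocallyPresentable (C : Type u) [Category.{v} C] (κ : Cardinal.{v}) : Prop :=
  Cardinal.IsRegular κ ∧ HasColimits C ∧ ∃ S : Set C,
    Small.{v} S ∧ (∀ X ∈ S, KPresentable κ X) ∧
    ∀ A : C, ∃ (J : Type v) (_ : SmallCategory J) (_ : IsKappaFiltered J κ) (F : J ⥤ C)
      (c : Cocone F), Nonempty (IsColimit c) ∧ c.pt = A ∧ ∀ j, F.obj j ∈ S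

/-- `K` is injective with respect to the morphism `n`. -/
def InjWrt {C : Type u} [Category.{v} C] {X Y : C} (n : X ⟶ Y) (K : C) : Prop :=
  ∀ u : X ⟶ K, ∃ w : Y ⟶ K, n ≫ w = u

/-- `f : A ⟶ B` is a `κ`-pure morphism. -/
def KPure {C : Type u} [Category.{v} C] (κ : Cardinal.{v}) {A B : C} (f : A ⟶ B) : Prop :=
  ∀ ⦃P Q : C⦄ (z : P ⟶ Q) (u : P ⟶ A) (v : Q ⟶ B), KPresentable κ P → KPresentable κ Q →
    u ≫ f = z ≫ v → ∃ d : Q ⟶ A, z ≫ d = u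


/-!
Extend `u : A ⟶ M` along a monomorphism `n : A ⟶ B` by pushing `n` out along `u`: by
transferability `pushout.inl u n` is a monomorphism out of `M`, and any retraction `r` of it
gives the extension `pushout.inr u n ≫ r`. Pure-injectivity supplies `r` once every monomorphism
`f` out of `M` is `κ`-pure. For that, given a square `u ≫ f = z ≫ v` with `P`, `Q`
`κ`-presentable, `pushout.inl u z` factors through `f`, so it is again a monomorphism out of
`M`, and it is `κ`-presentable in `M/C`: its hom-functor is the equalizer of
`q ↦ z ≫ q` and `q ↦ u ≫ X.hom` between the `κ`-accessible functors `C(Q, -)` and `C(P, -)`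
on `M/C`. So `κ`-injectivity yields a retraction, hence the diagonal `Q ⟶ M`.
-/

section

variable {κ : Cardinal.{v}} [Fact κ.IsRegular]

lemma isKappaFiltered_iff_isCardinalFiltered (J : Type v) [SmallCategory J] :
    IsKappaFiltered J κ ↔ IsCardinalFiltered J κ := by
  have hsize (K : Type v) [SmallCategory K] :
      Cardinal.mk (Σ (a : K) (b : K), a ⟶ b) < κ ↔ HasCardinalLT (Arrow K) κ := by
    rw [hasCardinalLT_iff_of_equiv (Arrow.equivSigma K), hasCardinalLT_iff_cardinal_mk_lt]
  exact ⟨fun hJ ↦ ⟨fun F hF ↦ hJ _ _ ((hsize _).2 hF) F⟩,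
    fun hJ K _ hK F ↦ hJ.nonempty_cocone F ((hsize K).1 hK)⟩

lemma kPresentable_iff_isCardinalPresentable {C : Type u} [Category.{v} C] (X : C) :
    KPresentable κ X ↔ IsCardinalPresentable X κ := by
  simp only [KPresentable, isKappaFiltered_iff_isCardinalFiltered]
  exact ⟨fun hX ↦ ⟨fun J _ hJ ↦ (hX J _ hJ).some⟩,
    fun hX J _ hJ ↦ ⟨hX.preservesColimitOfShape J⟩⟩

lemma Under.isCardinalAccessible_forget {C : Type u} [Category.{v} C] (M : C) :
    (Under.forget M).IsCardinalAccessible κ where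
  preservesColimitOfShape J _ _ := by
    have := isFiltered_of_isCardinalFiltered J κ
    have := IsFiltered.isConnected J
    infer_instance

end

section

variable {C : Type u} [Category.{v} C] [HasPushouts C] {P Q M : C} (z : P ⟶ Q) (u : P ⟶ M)

def underConstCompHom :
    Under.forget M ⋙ coyoneda.obj (op Q) ⟶ Under.forget M ⋙ coyoneda.obj (op P) where
  app X := ↾fun _ ↦ u ≫ X.hom
  naturality X Y f := by
    ext
    change u ≫ Y.hom = (u ≫ X.hom) ≫ f.right
    simp

noncomputable def pushoutInlCoyonedaFork :
    Fork (Functor.whiskerLeft (Under.forget M) (coyoneda.map z.op)) (underConstCompHom u) :=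
  Fork.ofι (P := coyoneda.obj (op (Under.mk (pushout.inl u z))))
    { app X := ↾fun x ↦ pushout.inr u z ≫ x.right
      naturality X Y f := by
        ext
        simp }
    (by
      ext X x
      change z ≫ pushout.inr u z ≫ x.right = u ≫ X.hom
      rw [← pushout.condition_assoc]
      exact congrArg (u ≫ ·) (Under.w x))

lemma existsUnique_under_pushoutInl_hom (X : Under M) (q : Q ⟶ X.right)
    (hq : z ≫ q = u ≫ X.hom) :
    ∃! x : Under.mk (pushout.inl u z) ⟶ X, pushout.inr u z ≫ x.right = q := by
  refine ⟨Under.homMk (pushout.desc X.hom q hq.symm) (pushout.inl_desc _ _ _),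
    pushout.inr_desc _ _ _, fun x hx ↦ ?_⟩
  ext
  apply pushout.hom_ext
  · exact (Under.w x).trans (pushout.inl_desc _ _ _).symm
  · exact hx.trans (pushout.inr_desc _ _ _).symm

noncomputable def isLimitPushoutInlCoyonedaFork : IsLimit (pushoutInlCoyonedaFork z u) :=
  evaluationJointlyReflectsLimits _ fun X ↦ (isLimitMapConeForkEquiv _ _).symm <|
    Types.typeEqualizerOfUnique _ _ fun q hq ↦ existsUnique_under_pushoutInl_hom z u X q hq

lemma kPresentable_under_pushoutInl {κ : Cardinal.{v}} (hκ : κ.IsRegular)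
    (hP : KPresentable κ P) (hQ : KPresentable κ Q) :
    KPresentable κ (Under.mk (pushout.inl u z)) := by
  have : Fact κ.IsRegular := ⟨hκ⟩
  have := Under.isCardinalAccessible_forget (κ := κ) M
  rw [kPresentable_iff_isCardinalPresentable] at hP hQ ⊢
  have (k : WalkingParallelPair) :
      (parallelPair (Functor.whiskerLeft (Under.forget M) (coyoneda.map z.op))
        (underConstCompHom u)).obj k |>.IsCardinalAccessible κ := by
    cases k <;> dsimp <;> infer_instance
  exact Functor.isCardinalAccessible_of_isLimit _ (isLimitPushoutInlCoyonedaFork z u) κ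
    (hasCardinalLT_of_finite _ _ hκ.aleph0_le)

end

def KInjective {C : Type u} [Category.{v} C] (κ : Cardinal.{v}) (M : C) : Prop :=
  ∀ {A B : C} (n : A ⟶ B), Mono n → KPresentable κ (Under.mk n) → InjWrt n M

lemma exists_comp_eq_of_injWrt_pushoutInl {C : Type u} [Category.{v} C] {A B M : C}
    (u : A ⟶ M) (n : A ⟶ B) [HasPushout u n] (h : InjWrt (pushout.inl u n) M) :
    ∃ d : B ⟶ M, n ≫ d = u := by
  obtain ⟨r, hr⟩ := h (𝟙 M)
  refine ⟨pushout.inr u n ≫ r, ?_⟩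
  rw [← Category.assoc, ← pushout.condition, Category.assoc, hr, Category.comp_id]

lemma KInjective.kPure_of_mono {C : Type u} [Category.{v} C] [HasPushouts C]
    {κ : Cardinal.{v}} (hκ : κ.IsRegular) {M N : C} (hM : KInjective κ M) (f : M ⟶ N)
    [Mono f] : KPure κ f := by
  intro P Q z u v hP hQ hsq
  have : Mono (pushout.inl u z) := mono_of_mono_fac (pushout.inl_desc f v hsq)
  exact exists_comp_eq_of_injWrt_pushoutInl u z
    (hM _ inferInstance (kPresentable_under_pushoutInl z u hκ hP hQ))

/-- In a locally `κ`-presentable category with the transferability property (monomorphisms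
are stable under pushouts), an object that is both `κ`-injective and `κ`-pure-injective is
injective with respect to all monomorphisms. -/
theorem injective_of_kInjective_of_kPureInjective {C : Type u} [Category.{v} C]
    {κ : Cardinal.{v}} (h : LocallyPresentable C κ)
    (transfer : ∀ {X Y Z W : C} (m : X ⟶ Y) (g : X ⟶ Z) (h' : Z ⟶ W) (i : Y ⟶ W),
      Mono m → IsPushout g m h' i → Mono h')
    (M : C)
    (hinj : ∀ {A B : C} (n : A ⟶ B), Mono n → KPresentable κ (Under.mk n) → InjWrt n M)
    (hpure : ∀ {A B : C} (n : A ⟶ B), Mono n → KPure κ n → InjWrt n M) :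
    ∀ {A B : C} (n : A ⟶ B), Mono n → InjWrt n M := by
  obtain ⟨hκ, _, -⟩ := h
  intro A B n hn u
  have : Mono (pushout.inl u n) := transfer n u _ _ hn (IsPushout.of_hasPushout u n)
  exact exists_comp_eq_of_injWrt_pushoutInl u n
    (hpure _ inferInstance (KInjective.kPure_of_mono hκ hinj _))
end

section
/- Let C be a locally λ-presentable category with the transferability property. Then every λ-injective object of C is absolutely λ-pure: every monomorphism with λ-injective domain is a λ-pure monomorphism. -/
universe v u

open CategoryTheory Limits Opposite

/-! Given `u ≫ f = z ≫ v` with `P`, `Q` κ-presentable, push `z` out along `u`. The cobase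
change `p : M ⟶ Q ⊔_P M` is mono because `f` factors through it, and `Under.mk p` is
κ-presentable in `Under M`: it is the image of `Under.mk z` under `Under.pushout u`, whose right
adjoint `Under.map u` preserves filtered colimits. Injectivity of `M` then yields a retraction of
`p`, and composing it with `Q ⟶ Q ⊔_P M` gives the diagonal `Q ⟶ M`. -/

section

variable {C : Type u} [Category.{v} C] {κ : Cardinal.{v}}

lemma IsKappaFiltered.isFiltered {J : Type v} [SmallCategory J] (hκ : Cardinal.aleph0 ≤ κ)
    (hJ : IsKappaFiltered J κ) : IsFiltered J :=
  IsFiltered.of_cocone_nonempty.{v} _ fun F =>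
    hJ _ inferInstance ((Cardinal.lt_aleph0_of_finite _).trans_le hκ) F

lemma CategoryTheory.Adjunction.kPresentable_obj {D : Type*} [Category.{v} D] {L : C ⥤ D}
    {R : D ⥤ C} (adj : L ⊣ R)
    (hR : ∀ (J : Type v) [SmallCategory J], IsKappaFiltered J κ → PreservesColimitsOfShape J R)
    {X : C} (hX : KPresentable κ X) : KPresentable κ (L.obj X) := by
  intro J _ hJ
  have := hR J hJ
  obtain ⟨_⟩ := hX J inferInstance hJ
  exact ⟨preservesColimitsOfShape_of_natIso
    (show R ⋙ coyoneda.obj (Opposite.op X) ≅ _ from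
      (adj.compCoyonedaIso.app (Opposite.op X)).symm)⟩

instance CategoryTheory.Under.preservesColimitsOfShape_map_of_isConnected {J : Type*} [Category J]
    [IsConnected J] {X Y : C} (f : X ⟶ Y) : PreservesColimitsOfShape J (Under.map f) where
  preservesColimit {K} :=
    have : PreservesColimit K (Under.map f ⋙ Under.forget X) :=
      preservesColimit_of_natIso K (Under.mapForget f).symm
    preservesColimit_of_reflects_of_preserves _ (Under.forget X)

/-- Morphisms `Under.mk z ⟶ X` are the `b : Q ⟶ X.right` with `z ≫ b = X.hom`; this fibre of
`Hom(Q, -) ⟶ Hom(P, -)` commutes with filtered colimits since both hom-functors do. -/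
lemma CategoryTheory.Under.kPresentable_mk (hκ : Cardinal.aleph0 ≤ κ) {P Q : C} (z : P ⟶ Q)
    (hP : KPresentable κ P) (hQ : KPresentable κ Q) : KPresentable κ (Under.mk z) := by
  intro J _ hJ
  have := hJ.isFiltered hκ
  obtain ⟨_⟩ := hP J inferInstance hJ
  obtain ⟨_⟩ := hQ J inferInstance hJ
  refine ⟨⟨fun {F} => ⟨fun {c} hc => ⟨?_⟩⟩⟩⟩
  have := IsFiltered.isConnected J
  have hc' := isColimitOfPreserves (Under.forget P) hc
  refine Types.FilteredColimit.isColimitOf _ _ (fun (x : Under.mk z ⟶ c.pt) => ?_)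
    (fun i j (xi : Under.mk z ⟶ F.obj i) (xj : Under.mk z ⟶ F.obj j) hij => ?_)
  · obtain ⟨j, (b : Q ⟶ (F.obj j).right), hb⟩ :=
      exists_hom_of_preservesColimit_coyoneda (X := Q) hc' x.right
    change b ≫ (c.ι.app j).right = x.right at hb
    have hz : (z ≫ b) ≫ (c.ι.app j).right = (F.obj j).hom ≫ (c.ι.app j).right := by
      rw [Category.assoc, hb, Under.w (c.ι.app j)]
      exact Under.w x
    obtain ⟨k, a, ha⟩ := exists_eq_of_preservesColimit_coyoneda_self (X := P) hc' _ _ hz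
    refine ⟨k, Under.homMk (b ≫ (F.map a).right) ((Category.assoc _ _ _).symm.trans
      (ha.trans (Under.w (F.map a)))), Under.UnderMorphism.ext ?_⟩
    change x.right = (b ≫ (F.map a).right) ≫ (c.ι.app k).right
    rw [Category.assoc, ← Under.comp_right, c.w a, hb]
  · change xi ≫ c.ι.app i = xj ≫ c.ι.app j at hij
    obtain ⟨k, f, g, h⟩ := exists_eq_of_preservesColimit_coyoneda (X := Q) hc' xi.right xj.right
      (by simpa using congrArg Under.Hom.right hij)
    exact ⟨k, f, g, Under.UnderMorphism.ext (by simpa using h)⟩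

lemma CategoryTheory.Under.kPresentable_pushout_obj (hκ : Cardinal.aleph0 ≤ κ) {M P Q : C}
    (u : P ⟶ M) [HasPushoutsAlong u] (z : P ⟶ Q) (hP : KPresentable κ P) (hQ : KPresentable κ Q) :
    KPresentable κ ((Under.pushout u).obj (Under.mk z)) :=
  (Under.mapPushoutAdj u).kPresentable_obj
    (fun _ _ hJ => have := (hJ.isFiltered hκ).isConnected; inferInstance)
    (Under.kPresentable_mk hκ z hP hQ)

lemma InjWrt.exists_comp_eq_of_pushout {M P Q : C} {z : P ⟶ Q} {u : P ⟶ M} [HasPushout z u]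
    (hM : InjWrt (pushout.inr z u) M) : ∃ d : Q ⟶ M, z ≫ d = u := by
  obtain ⟨w, hw⟩ := hM (𝟙 M)
  exact ⟨pushout.inl z u ≫ w, by
    rw [← Category.assoc, pushout.condition, Category.assoc, hw, Category.comp_id]⟩

end

theorem kInjective_absolutelyPure_general {C : Type u} [Category.{v} C]
    {κ : Cardinal.{v}} (h : LocallyPresentable C κ)
    (M : C)
    (hinj : ∀ {A B : C} (n : A ⟶ B), Mono n → KPresentable κ (Under.mk n) → InjWrt n M)
    {B : C} (f : M ⟶ B) (hf : Mono f) : KPure κ f := by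
  intro P Q z u v hP hQ hcomm
  have : HasColimits C := h.2.1
  have hp : Mono (pushout.inr z u) := mono_of_mono_fac (pushout.inr_desc v f hcomm.symm)
  exact (hinj _ hp (Under.kPresentable_pushout_obj h.1.aleph0_le u z hP hQ)
    ).exists_comp_eq_of_pushout

/-- In a locally `κ`-presentable category with the transferability property, every
`κ`-injective object is absolutely `κ`-pure: every monomorphism out of it is `κ`-pure. -/
theorem kInjective_absolutelyPure {C : Type u} [Category.{v} C]
    {κ : Cardinal.{v}} (h : LocallyPresentable C κ)
    (transfer : ∀ {X Y Z W : C} (m : X ⟶ Y) (g : X ⟶ Z) (h' : Z ⟶ W) (i : Y ⟶ W),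
      Mono m → IsPushout g m h' i → Mono h')
    (M : C)
    (hinj : ∀ {A B : C} (n : A ⟶ B), Mono n → KPresentable κ (Under.mk n) → InjWrt n M)
    {B : C} (f : M ⟶ B) (hf : Mono f) : KPure κ f :=
  kInjective_absolutelyPure_general h M hinj f hf
end
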